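/- arXiv:1205.5429 — 2 statements merged into one kernel-verified Lean document; each statement's English description precedes it below -/
import Mathlib

section
/- Let (f_n) be a uniformly equicontinuous sequence of functions from [0,1] to [0,1]. If (f_n) is pointwise Cauchy on the rationals in [0,1] with a given rate (i.e., there is a function M : ℕ → ℕ such that for each k and each of finitely many specified rational points the sequence is 2^{-k}-Cauchy beyond M(k)), then (f_n) converges uniformly at a rate computable from M and the modulus of equicontinuity; in particular, pointwise convergence with a rate on ℚ ∩ [0,1] implies uniform convergence with a rate. -/
open Set

theorem exists_rat_mem_Icc_abs_sub_lt {a b x ε : ℝ} (hab : a < b) (hx : x ∈ Icc a b)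
    (hε : 0 < ε) : ∃ q : ℚ, (q : ℝ) ∈ Icc a b ∧ |x - q| < ε := by
  have hlt : max a (x - ε) < min b (x + ε) := by
    refine max_lt (lt_min hab ?_) (lt_min ?_ ?_) <;> linarith [hx.1, hx.2]
  obtain ⟨q, hlo, hhi⟩ := exists_rat_btwn hlt
  rw [max_lt_iff] at hlo
  rw [lt_min_iff] at hhi
  exact ⟨q, ⟨hlo.1.le, hhi.1.le⟩, abs_sub_lt_iff.2 ⟨by linarith, by linarith⟩⟩

theorem three_mul_two_zpow_neg_add_two_lt (k : ℕ) :
    3 * (2 : ℝ) ^ (-((k + 2 : ℕ) : ℤ)) < (2 : ℝ) ^ (-(k : ℤ)) := by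
  have hquarter : (2 : ℝ) ^ (-(2 : ℤ)) = 1 / 4 := by norm_num
  rw [Nat.cast_add, neg_add, zpow_add₀ two_ne_zero, Nat.cast_ofNat, hquarter]
  linarith [zpow_pos (two_pos : (0 : ℝ) < 2) (-(k : ℤ))]

-- Compare `f n x` with `f n' x` through a rational within `2^(-φ' (k+2))` of `x`:
-- three errors below `2^(-(k+2))` add up to less than `2^(-k)`.
theorem stmt2_general (f : ℕ → ℝ → ℝ) (φ' : ℕ → ℕ) (M : ℕ → ℕ)
    (hequi : ∀ l : ℕ, ∀ n : ℕ, ∀ x ∈ Icc (0:ℝ) 1, ∀ y ∈ Icc (0:ℝ) 1,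
      |x - y| < (2:ℝ)^(-(φ' l : ℤ)) → |f n x - f n y| < (2:ℝ)^(-(l:ℤ)))
    (hrate : ∀ k : ℕ, ∀ q : ℚ, (q:ℝ) ∈ Icc (0:ℝ) 1 →
      ∀ n ≥ M k, ∀ n' ≥ M k, |f n (q:ℝ) - f n' (q:ℝ)| < (2:ℝ)^(-(k:ℤ))) :
    ∃ M' : ℕ → ℕ, ∀ k : ℕ, ∀ n ≥ M' k, ∀ n' ≥ M' k, ∀ x ∈ Icc (0:ℝ) 1,
      |f n x - f n' x| < (2:ℝ)^(-(k:ℤ)) := by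
  refine ⟨fun k => M (k + 2), fun k n hn n' hn' x hx => ?_⟩
  obtain ⟨q, hq, hxq⟩ := exists_rat_mem_Icc_abs_sub_lt zero_lt_one hx
    (zpow_pos two_pos (-(φ' (k + 2) : ℤ)))
  have hnx := hequi (k + 2) n x hx q hq hxq
  have hn'x := hequi (k + 2) n' x hx q hq hxq
  have hq_cauchy := hrate (k + 2) q hq n hn n' hn'
  calc |f n x - f n' x|
      ≤ |f n x - f n q| + |f n q - f n' q| + |f n' x - f n' q| := by
        linarith [abs_sub_le (f n x) (f n q) (f n' x), abs_sub_le (f n q) (f n' q) (f n' x),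
          abs_sub_comm (f n' q) (f n' x)]
    _ < 3 * (2 : ℝ) ^ (-((k + 2 : ℕ) : ℤ)) := by linarith
    _ < (2 : ℝ) ^ (-(k : ℤ)) := three_mul_two_zpow_neg_add_two_lt k

theorem stmt2 (f : ℕ → ℝ → ℝ) (φ' : ℕ → ℕ) (M : ℕ → ℕ)
    (hmap : ∀ n, ∀ x ∈ Icc (0:ℝ) 1, f n x ∈ Icc (0:ℝ) 1)
    (hequi : ∀ l : ℕ, ∀ n : ℕ, ∀ x ∈ Icc (0:ℝ) 1, ∀ y ∈ Icc (0:ℝ) 1,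
      |x - y| < (2:ℝ)^(-(φ' l : ℤ)) → |f n x - f n y| < (2:ℝ)^(-(l:ℤ)))
    (hrate : ∀ k : ℕ, ∀ q : ℚ, (q:ℝ) ∈ Icc (0:ℝ) 1 →
      ∀ n ≥ M k, ∀ n' ≥ M k, |f n (q:ℝ) - f n' (q:ℝ)| < (2:ℝ)^(-(k:ℤ))) :
    ∃ M' : ℕ → ℕ, ∀ k : ℕ, ∀ n ≥ M' k, ∀ n' ≥ M' k, ∀ x ∈ Icc (0:ℝ) 1,
      |f n x - f n' x| < (2:ℝ)^(-(k:ℤ)) :=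
  stmt2_general f φ' M hequi hrate
end

section
/- Define F : C([0,1],[0,1]) → [0,1]^ℕ by F(f) = (f(q(i)))_{i∈ℕ}, where q : ℕ → ℚ ∩ [0,1] is a surjective enumeration of the rationals in [0,1], and equip [0,1]^ℕ with the metric d((x_i),(y_i)) = Σ_i 2^{-i}|x_i - y_i|. Then for any uniformly equicontinuous sequence (f_n) of functions [0,1] → [0,1] and any strictly increasing g : ℕ → ℕ, the sequence (F(f_{g(n)})) converges in [0,1]^ℕ if and only if (f_{g(n)}) converges uniformly on [0,1]. -/
/-!
Because the weights `2^(-i)` are summable and all values lie in `[0, 1]`, convergence of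
`F (f (g n))` in the weighted metric is the same as convergence of `f (g n)` at every rational
point (dominated convergence for series). Uniform equicontinuity upgrades pointwise convergence
on the dense set of rationals to a uniform Cauchy condition on `[0, 1]`: finitely many rationals
are `δ`-dense in `[0, 1]`, and an `ε/3` argument through the nearest one bounds
`|f (g m) x - f (g n) x|`.
-/

open Set Filter Topology Metric

theorem tendsto_tsum_mul_abs_nhds_zero_iff {α ι : Type*} {l : Filter α} {w : ι → ℝ}
    {u : α → ι → ℝ} {C : ℝ} (hw : Summable w) (hw_pos : ∀ i, 0 < w i)
    (hu : ∀ n i, |u n i| ≤ C) :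
    Tendsto (fun n => ∑' i, w i * |u n i|) l (𝓝 0) ↔
      ∀ i, Tendsto (fun n => u n i) l (𝓝 0) := by
  have hbound : ∀ n i, ‖w i * |u n i|‖ ≤ w i * C := fun n i => by
    rw [Real.norm_of_nonneg (mul_nonneg (hw_pos i).le (abs_nonneg _))]
    exact mul_le_mul_of_nonneg_left (hu n i) (hw_pos i).le
  constructor
  · intro hlim i
    have hle : ∀ n, |u n i| ≤ (w i)⁻¹ * ∑' j, w j * |u n j| := fun n => by
      rw [le_inv_mul_iff₀ (hw_pos i)]
      exact (hw.mul_right C).of_norm_bounded (hbound n) |>.le_tsum i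
        fun j _ => mul_nonneg (hw_pos j).le (abs_nonneg _)
    refine tendsto_zero_iff_abs_tendsto_zero _ |>.2 <| squeeze_zero (fun n => abs_nonneg _) hle ?_
    simpa using hlim.const_mul (w i)⁻¹
  · intro hlim
    have hterm (i : ι) : Tendsto (fun n => w i * |u n i|) l (𝓝 0) := by
      simpa using (hlim i).abs.const_mul (w i)
    simpa using tendsto_tsum_of_dominated_convergence (hw.mul_right C) hterm
      (Eventually.of_forall hbound)

theorem Icc_subset_closure_Icc_inter_range_ratCast {a b : ℝ} (hab : a < b) :
    Icc a b ⊆ closure (Icc a b ∩ range ((↑) : ℚ → ℝ)) := by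
  refine (closure_Ioo hab.ne).symm.subset.trans (closure_minimal ?_ isClosed_closure)
  exact (Rat.denseRange_cast.open_subset_closure_inter isOpen_Ioo).trans
    (closure_mono (inter_subset_inter_left _ Ioo_subset_Icc_self))

theorem two_zpow_neg_natCast (k : ℕ) : (2:ℝ) ^ (-(k:ℤ)) = (1 / 2) ^ k := by
  rw [zpow_neg, zpow_natCast, one_div, inv_pow]

theorem summable_two_zpow_neg_natCast : Summable fun i : ℕ => (2:ℝ) ^ (-(i:ℤ)) := by
  simpa only [two_zpow_neg_natCast] using summable_geometric_two

variable {ι X α : Type*} [PseudoMetricSpace X] [PseudoMetricSpace α]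

theorem uniformEquicontinuousOn_of_two_zpow {F : ι → X → α} {S : Set X}
    (h : ∀ l : ℕ, ∃ j : ℕ, ∀ n, ∀ x ∈ S, ∀ y ∈ S,
      dist x y < (2:ℝ)^(-(j:ℤ)) → dist (F n x) (F n y) < (2:ℝ)^(-(l:ℤ))) :
    UniformEquicontinuousOn F S := by
  have hhalf : (0:ℝ) < 1 / 2 ∧ (1:ℝ) / 2 < 1 := by norm_num
  have hbasis := uniformity_basis_dist_pow (α := X) hhalf.1 hhalf.2
  rw [(hbasis.inf_principal (S ×ˢ S)).uniformEquicontinuousOn_iff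
    (uniformity_basis_dist_pow hhalf.1 hhalf.2)]
  simp only [two_zpow_neg_natCast] at h
  intro l _
  obtain ⟨j, hj⟩ := h l
  exact ⟨j, trivial, fun x y ⟨hxy, hx, hy⟩ n => hj n x hx y hy hxy⟩

theorem UniformEquicontinuousOn.uniformCauchySeqOn_of_subset_closure [Nonempty ι]
    [SemilatticeSup ι] {F : ι → X → α} {S D : Set X}
    (hF : UniformEquicontinuousOn F S) (hS : TotallyBounded S) (hDS : D ⊆ S)
    (hSD : S ⊆ closure D) (hFD : ∀ x ∈ D, CauchySeq (F · x)) :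
    UniformCauchySeqOn F atTop S := by
  intro U hU
  obtain ⟨ε, hε, hεU⟩ := mem_uniformity_dist.1 hU
  obtain ⟨δ, hδ, hFδ⟩ : ∃ δ > 0, ∀ x y, (x, y) ∈ {p : X × X | dist p.1 p.2 < δ} ∩ S ×ˢ S →
      ∀ n, dist (F n x) (F n y) < ε / 3 :=
    (uniformity_basis_dist.inf_principal (S ×ˢ S)).uniformEquicontinuousOn_iff
      uniformity_basis_dist |>.1 hF (ε / 3) (by positivity)
  obtain ⟨t, htD, htfin, hDt⟩ :=
    finite_approx_of_totallyBounded (hS.subset hDS) (δ / 2) (by positivity)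
  have hSt : ∀ x ∈ S, ∃ z ∈ t, dist x z < δ := fun x hx => by
    obtain ⟨y, hyD, hxy⟩ := Metric.mem_closure_iff.1 (hSD hx) (δ / 2) (by positivity)
    obtain ⟨z, hz, hyz⟩ := mem_iUnion₂.1 (hDt hyD)
    exact ⟨z, hz, by linarith [dist_triangle x y z, mem_ball.1 hyz]⟩
  have ht : ∀ᶠ p in atTop ×ˢ atTop, ∀ z ∈ t, dist (F p.1 z) (F p.2 z) < ε / 3 := by
    rw [prod_atTop_atTop_eq]
    exact htfin.eventually_all.2 fun z hz =>
      cauchySeq_iff_tendsto.1 (hFD z (htD hz)) (dist_mem_uniformity (by positivity))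
  filter_upwards [ht] with p hp x hx
  obtain ⟨z, hz, hxz⟩ := hSt x hx
  have hzS := hDS (htD hz)
  refine hεU ?_
  calc dist (F p.1 x) (F p.2 x)
      ≤ dist (F p.1 x) (F p.1 z) + dist (F p.1 z) (F p.2 z) + dist (F p.2 z) (F p.2 x) :=
        dist_triangle4 _ _ _ _
    _ < ε / 3 + ε / 3 + ε / 3 := by
        gcongr
        · exact hFδ x z ⟨hxz, hx, hzS⟩ p.1
        · exact hp z hz
        · exact hFδ z x ⟨(dist_comm z x).trans_lt hxz, hzS, hx⟩ p.2
    _ = ε := by ring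

theorem stmt4_general (q : ℕ → ℚ)
    (hq1 : ∀ i, ((q i : ℝ)) ∈ Icc (0:ℝ) 1)
    (hq2 : ∀ r : ℚ, (r:ℝ) ∈ Icc (0:ℝ) 1 → ∃ i, q i = r)
    (f : ℕ → ℝ → ℝ)
    (hmap : ∀ n, ∀ x ∈ Icc (0:ℝ) 1, f n x ∈ Icc (0:ℝ) 1)
    (hequi : ∀ l : ℕ, ∃ j : ℕ, ∀ n : ℕ, ∀ x ∈ Icc (0:ℝ) 1, ∀ y ∈ Icc (0:ℝ) 1,
      |x - y| < (2:ℝ)^(-(j:ℤ)) → |f n x - f n y| < (2:ℝ)^(-(l:ℤ)))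
    (g : ℕ → ℕ) :
    (∃ L : ℕ → ℝ, (∀ i, L i ∈ Icc (0:ℝ) 1) ∧
        Tendsto (fun n => ∑' i : ℕ, (2:ℝ)^(-(i:ℤ)) * |f (g n) ((q i : ℝ)) - L i|)
          atTop (nhds 0))
      ↔ (∃ h : ℝ → ℝ, TendstoUniformlyOn (fun n => f (g n)) h atTop (Icc (0:ℝ) 1)) := by
  have hqdense : Icc (0:ℝ) 1 ⊆ closure (range fun i => (q i : ℝ)) := by
    refine (Icc_subset_closure_Icc_inter_range_ratCast zero_lt_one).trans (closure_mono ?_)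
    rintro _ ⟨hr, r, rfl⟩
    obtain ⟨i, rfl⟩ := hq2 r hr
    exact mem_range_self i
  have hequicont : UniformEquicontinuousOn (fun n => f (g n)) (Icc 0 1) :=
    uniformEquicontinuousOn_of_two_zpow fun l => (hequi l).imp fun _ hj n => hj (g n)
  have hdist_le_one (L : ℕ → ℝ) (hL : ∀ i, L i ∈ Icc (0:ℝ) 1) (n i : ℕ) :
      |f (g n) (q i) - L i| ≤ 1 := by
    obtain ⟨hf₀, hf₁⟩ := hmap (g n) _ (hq1 i)
    obtain ⟨hL₀, hL₁⟩ := hL i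
    exact abs_sub_le_of_nonneg_of_le hf₀ hf₁ hL₀ hL₁
  have hconv_iff (L : ℕ → ℝ) (hL : ∀ i, L i ∈ Icc (0:ℝ) 1) :
      Tendsto (fun n => ∑' i : ℕ, (2:ℝ)^(-(i:ℤ)) * |f (g n) (q i) - L i|) atTop (𝓝 0) ↔
        ∀ i, Tendsto (fun n => f (g n) (q i)) atTop (𝓝 (L i)) := by
    simpa only [tendsto_sub_nhds_zero_iff] using tendsto_tsum_mul_abs_nhds_zero_iff
      summable_two_zpow_neg_natCast (fun i => by positivity) (hdist_le_one L hL)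
  constructor
  · rintro ⟨L, hL, hlim⟩
    have hpt := (hconv_iff L hL).1 hlim
    have hcauchy := hequicont.uniformCauchySeqOn_of_subset_closure isCompact_Icc.totallyBounded
      (range_subset_iff.2 hq1) hqdense (by rintro _ ⟨i, rfl⟩; exact (hpt i).cauchySeq)
    exact ⟨fun x => limUnder atTop fun n => f (g n) x,
      hcauchy.tendstoUniformlyOn_of_tendsto fun x hx => (hcauchy.cauchySeq hx).tendsto_limUnder⟩
  · rintro ⟨h, hu⟩
    have hpt (i : ℕ) : Tendsto (fun n => f (g n) (q i)) atTop (𝓝 (h (q i))) :=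
      hu.tendsto_at (hq1 i)
    have hL (i : ℕ) : h (q i) ∈ Icc (0:ℝ) 1 :=
      isClosed_Icc.mem_of_tendsto (hpt i) (Eventually.of_forall fun n => hmap _ _ (hq1 i))
    exact ⟨_, hL, (hconv_iff _ hL).2 hpt⟩

theorem stmt4 (q : ℕ → ℚ)
    (hq1 : ∀ i, ((q i : ℝ)) ∈ Icc (0:ℝ) 1)
    (hq2 : ∀ r : ℚ, (r:ℝ) ∈ Icc (0:ℝ) 1 → ∃ i, q i = r)
    (f : ℕ → ℝ → ℝ)
    (hmap : ∀ n, ∀ x ∈ Icc (0:ℝ) 1, f n x ∈ Icc (0:ℝ) 1)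
    (hequi : ∀ l : ℕ, ∃ j : ℕ, ∀ n : ℕ, ∀ x ∈ Icc (0:ℝ) 1, ∀ y ∈ Icc (0:ℝ) 1,
      |x - y| < (2:ℝ)^(-(j:ℤ)) → |f n x - f n y| < (2:ℝ)^(-(l:ℤ)))
    (g : ℕ → ℕ) (hg : StrictMono g) :
    (∃ L : ℕ → ℝ, (∀ i, L i ∈ Icc (0:ℝ) 1) ∧
        Tendsto (fun n => ∑' i : ℕ, (2:ℝ)^(-(i:ℤ)) * |f (g n) ((q i : ℝ)) - L i|)
          atTop (nhds 0))
      ↔ (∃ h : ℝ → ℝ, TendstoUniformlyOn (fun n => f (g n)) h atTop (Icc (0:ℝ) 1)) :=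
  stmt4_general q hq1 hq2 f hmap hequi g
end
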